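/- arXiv:2508.01065 — 6 statements merged into one kernel-verified Lean document; each statement's English description precedes it below -/
import Mathlib

section
/- Let P be a c×c (c ≥ 2) left-stochastic matrix with nonnegative entries and set ρ_j = 1 − P_{j,j}, ρ_max = max_j ρ_j with ρ_max < 1/2. Then max_j Σ_i P_{i,j}(1−P_{i,j}) ≤ 2ρ_max − (c/(c−1)) ρ_max². -/
open Finset

theorem stmt7 (c : ℕ) (hc : 2 ≤ c) (P : Matrix (Fin c) (Fin c) ℝ)
    (hpos : ∀ i j, 0 ≤ P i j) (hcol : ∀ j, ∑ i, P i j = 1)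
    (ρmax : ℝ) (hρ : IsGreatest (Set.range fun j => 1 - P j j) ρmax)
    (hhalf : ρmax < 1 / 2) :
    ∀ j, ∑ i, P i j * (1 - P i j) ≤ 2 * ρmax - ((c : ℝ) / ((c : ℝ) - 1)) * ρmax ^ 2 := by
  intro j
  set ρ : ℝ := 1 - P j j with hρdef
  have hcR : (2 : ℝ) ≤ (c : ℝ) := by exact_mod_cast hc
  have hc1 : (0 : ℝ) < (c : ℝ) - 1 := by linarith
  have hρle : ρ ≤ ρmax := hρ.2 ⟨j, rfl⟩
  -- ρ = sum over i ≠ j of P i j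
  have hsplit : ∑ i ∈ univ.erase j, P i j = ρ := by
    have := hcol j
    rw [← Finset.add_sum_erase univ (fun i => P i j) (mem_univ j)] at this
    linarith
  have hρ0 : 0 ≤ ρ := hsplit ▸ Finset.sum_nonneg (fun i _ => hpos i j)
  -- Cauchy-Schwarz
  have hcard : (#(univ.erase j) : ℝ) = (c : ℝ) - 1 := by
    rw [Finset.card_erase_of_mem (mem_univ j)]
    simp
    rw [Nat.cast_sub (by omega)]
    simp
  have hCS : ρ ^ 2 ≤ ((c : ℝ) - 1) * ∑ i ∈ univ.erase j, P i j ^ 2 := by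
    have := sq_sum_le_card_mul_sum_sq (s := univ.erase j) (f := fun i => P i j)
    rw [hsplit, hcard] at this
    exact this
  -- expand the sum
  have hexp : ∑ i, P i j * (1 - P i j) = 1 - (P j j) ^ 2 - ∑ i ∈ univ.erase j, P i j ^ 2 := by
    have h1 : ∑ i, P i j * (1 - P i j) = ∑ i, P i j - ∑ i, P i j ^ 2 := by
      rw [← Finset.sum_sub_distrib]; congr 1; ext i; ring
    rw [h1, hcol j, ← Finset.add_sum_erase univ (fun i => P i j ^ 2) (mem_univ j)]
    ring
  have hPjj : P j j = 1 - ρ := by rw [hρdef]; ring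
  have key : ∑ i, P i j * (1 - P i j) ≤ 2 * ρ - ((c : ℝ) / ((c : ℝ) - 1)) * ρ ^ 2 := by
    rw [hexp, hPjj]
    have h2 : ρ ^ 2 / ((c : ℝ) - 1) ≤ ∑ i ∈ univ.erase j, P i j ^ 2 := by
      rw [div_le_iff₀ hc1]; linarith [hCS]
    have h3 : ((c : ℝ) / ((c : ℝ) - 1)) * ρ ^ 2 = ρ ^ 2 + ρ ^ 2 / ((c : ℝ) - 1) := by
      field_simp; ring
    rw [h3]; nlinarith
  have mono : 2 * ρ - ((c : ℝ) / ((c : ℝ) - 1)) * ρ ^ 2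
      ≤ 2 * ρmax - ((c : ℝ) / ((c : ℝ) - 1)) * ρmax ^ 2 := by
    have hfac : (c : ℝ) / ((c : ℝ) - 1) ≤ 2 := by
      rw [div_le_iff₀ hc1]; linarith
    have hfac0 : 0 ≤ (c : ℝ) / ((c : ℝ) - 1) := by positivity
    have hsum : ((c : ℝ) / ((c : ℝ) - 1)) * (ρmax + ρ) ≤ 2 := by
      calc ((c : ℝ) / ((c : ℝ) - 1)) * (ρmax + ρ) ≤ 2 * (ρmax + ρ) := by
            apply mul_le_mul_of_nonneg_right hfac; linarith
        _ ≤ 2 := by linarith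
    nlinarith [mul_nonneg (sub_nonneg.2 hρle) (sub_nonneg.2 hsum)]
  linarith
end

section
/- Let P be a c×c left-stochastic matrix with nonnegative entries and ρ_max = max_k(1−P_{k,k}) < 1/2. Then for any x ∈ ℝ^c with ‖x‖₁ = 1, ‖Px‖₁ ≥ 1 − 2ρ_max. Consequently ‖P⁻¹‖₁ ≤ 1/(1−2ρ_max), where ‖·‖₁ denotes the induced 1-norm. -/
open Finset Matrix

private lemma key10 (c : ℕ) (P : Matrix (Fin c) (Fin c) ℝ)
    (hpos : ∀ j k, 0 ≤ P j k) (hcol : ∀ k, ∑ j, P j k = 1)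
    (ρmax : ℝ) (hρ : IsGreatest (Set.range fun k => 1 - P k k) ρmax)
    (x : Fin c → ℝ) :
    (1 - 2 * ρmax) * ∑ k, |x k| ≤ ∑ k, |(P.mulVec x) k| := by
  have hdiag : ∀ k, 1 - P k k ≤ ρmax := fun k => hρ.2 ⟨k, rfl⟩
  have step1 : ∀ j, 2 * P j j * |x j| - ∑ k, P j k * |x k| ≤ |(P.mulVec x) j| := by
    intro j
    have hsplit : (P.mulVec x) j = P j j * x j + ∑ k ∈ univ.erase j, P j k * x k := by
      simp only [Matrix.mulVec, dotProduct]
      exact (Finset.add_sum_erase _ _ (Finset.mem_univ j)).symm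
    have h1 : |P j j * x j| - |∑ k ∈ univ.erase j, P j k * x k| ≤ |(P.mulVec x) j| := by
      rw [hsplit]
      have h := abs_add_le (P j j * x j + ∑ k ∈ univ.erase j, P j k * x k)
        (-(∑ k ∈ univ.erase j, P j k * x k))
      rw [add_neg_cancel_right, abs_neg] at h
      linarith
    have h2 : |∑ k ∈ univ.erase j, P j k * x k| ≤ ∑ k, P j k * |x k| - P j j * |x j| := by
      calc |∑ k ∈ univ.erase j, P j k * x k| ≤ ∑ k ∈ univ.erase j, |P j k * x k| :=
            Finset.abs_sum_le_sum_abs _ _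
        _ = ∑ k ∈ univ.erase j, P j k * |x k| := by
            refine Finset.sum_congr rfl fun k _ => ?_
            rw [abs_mul, abs_of_nonneg (hpos j k)]
        _ = ∑ k, P j k * |x k| - P j j * |x j| := by
            rw [← Finset.add_sum_erase _ (fun k => P j k * |x k|) (Finset.mem_univ j)]
            ring
    have h3 : |P j j * x j| = P j j * |x j| := by
      rw [abs_mul, abs_of_nonneg (hpos j j)]
    linarith
  have hsum : ∑ j, (2 * P j j * |x j| - ∑ k, P j k * |x k|) ≤ ∑ k, |(P.mulVec x) k| :=
    Finset.sum_le_sum fun j _ => step1 j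
  have hswap : ∑ j, ∑ k, P j k * |x k| = ∑ k, |x k| := by
    rw [Finset.sum_comm]
    refine Finset.sum_congr rfl fun k _ => ?_
    rw [← Finset.sum_mul, hcol k, one_mul]
  have hlhs : (1 - 2 * ρmax) * ∑ k, |x k| ≤
      ∑ j, (2 * P j j * |x j| - ∑ k, P j k * |x k|) := by
    rw [Finset.sum_sub_distrib, hswap, Finset.mul_sum, ← Finset.sum_sub_distrib]
    refine Finset.sum_le_sum fun k _ => ?_
    have := hdiag k
    nlinarith [abs_nonneg (x k)]
  linarith

theorem stmt10 (c : ℕ) (P : Matrix (Fin c) (Fin c) ℝ)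
    (hpos : ∀ j k, 0 ≤ P j k) (hcol : ∀ k, ∑ j, P j k = 1)
    (ρmax : ℝ) (hρ : IsGreatest (Set.range fun k => 1 - P k k) ρmax)
    (hhalf : ρmax < 1 / 2) :
    (∀ x : Fin c → ℝ, ∑ k, |x k| = 1 → 1 - 2 * ρmax ≤ ∑ k, |(P.mulVec x) k|) ∧
    (∀ y : Fin c → ℝ, ∑ k, |(P⁻¹.mulVec y) k| ≤ (1 / (1 - 2 * ρmax)) * ∑ k, |y k|) := by
  have hkey := key10 c P hpos hcol ρmax hρ
  have hpos2 : 0 < 1 - 2 * ρmax := by linarith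
  constructor
  · intro x hx
    have := hkey x
    rw [hx, mul_one] at this
    exact this
  · intro y
    -- P is invertible
    have hinj : Function.Injective P.mulVec := by
      intro a b hab
      have h0 : P.mulVec (a - b) = 0 := by
        rw [Matrix.mulVec_sub, hab, sub_self]
      have := hkey (a - b)
      rw [h0] at this
      simp only [Pi.zero_apply, abs_zero, Finset.sum_const_zero, Pi.sub_apply] at this
      have hsum0 : ∑ k, |a k - b k| ≤ 0 := by
        by_contra h
        push_neg at h
        nlinarith
      have hnn : 0 ≤ ∑ k, |a k - b k| :=
        Finset.sum_nonneg fun k _ => abs_nonneg _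
      have heq : ∑ k, |a k - b k| = 0 := le_antisymm hsum0 hnn
      funext k
      have h0k := (Finset.sum_eq_zero_iff_of_nonneg fun k _ => abs_nonneg _).1 heq k (mem_univ k)
      have : a k - b k = 0 := abs_eq_zero.1 h0k
      linarith
    have hunit : IsUnit P := Matrix.mulVec_injective_iff_isUnit.1 hinj
    have hPPinv : P * P⁻¹ = 1 :=
      Matrix.mul_nonsing_inv P ((Matrix.isUnit_iff_isUnit_det P).1 hunit)
    have hPx : P.mulVec (P⁻¹.mulVec y) = y := by
      rw [Matrix.mulVec_mulVec, hPPinv, Matrix.one_mulVec]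
    have := hkey (P⁻¹.mulVec y)
    rw [hPx] at this
    rw [div_mul_eq_mul_div, le_div_iff₀ hpos2, one_mul]
    linarith
end

section
/- Let P be a c×c left-stochastic matrix with nonnegative entries and ρ_max = max_k(1−P_{k,k}) < 1/2. Then the induced 2-norm of P⁻¹ satisfies ‖P⁻¹‖₂² ≤ c/(1−2ρ_max)². -/
open Finset Matrix

theorem stmt11 (c : ℕ) (P : Matrix (Fin c) (Fin c) ℝ)
    (hpos : ∀ j k, 0 ≤ P j k) (hcol : ∀ k, ∑ j, P j k = 1)
    (ρmax : ℝ) (hρ : IsGreatest (Set.range fun k => 1 - P k k) ρmax)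
    (hhalf : ρmax < 1 / 2) :
    ∀ y : Fin c → ℝ,
      ∑ i, (P⁻¹.mulVec y) i ^ 2 ≤ ((c : ℝ) / (1 - 2 * ρmax) ^ 2) * ∑ i, y i ^ 2 := by
  intro y
  have hdiag : ∀ k, 1 - ρmax ≤ P k k := by
    intro k
    have h := hρ.2 ⟨k, rfl⟩
    simp only at h
    linarith
  have h2ρ : (0:ℝ) < 1 - 2 * ρmax := by linarith
  -- invertibility
  have hdet : P.det ≠ 0 := by
    apply det_ne_zero_of_sum_col_lt_diag
    intro k
    have hsum : ∑ i ∈ Finset.univ.erase k, P i k = 1 - P k k := by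
      have := Finset.sum_erase_eq_sub (f := fun i => P i k) (Finset.mem_univ k)
      rw [this, hcol k]
    have h1 : ∑ i ∈ Finset.univ.erase k, ‖P i k‖ = 1 - P k k := by
      rw [← hsum]; exact Finset.sum_congr rfl fun i _ => Real.norm_of_nonneg (hpos i k)
    have h2 : ‖P k k‖ = P k k := Real.norm_of_nonneg (hpos k k)
    rw [h1, h2]
    have := hdiag k
    linarith
  set x := P⁻¹.mulVec y with hx
  have hPx : P.mulVec x = y := by
    rw [hx, Matrix.mulVec_mulVec, Matrix.mul_nonsing_inv _ (isUnit_iff_ne_zero.2 hdet),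
      Matrix.one_mulVec]
  -- L1 bound
  have hL1 : (1 - 2 * ρmax) * ∑ i, |x i| ≤ ∑ i, |y i| := by
    have key : ∀ i, 2 * P i i * |x i| - ∑ k, P i k * |x k| ≤ |y i| := by
      intro i
      have hyi : y i = ∑ k, P i k * x k := by rw [← hPx]; rfl
      have h1 : P i i * |x i| - ∑ k ∈ Finset.univ.erase i, P i k * |x k| ≤ |y i| := by
        rw [hyi]
        have hsplit : ∑ k, P i k * x k
            = P i i * x i + ∑ k ∈ Finset.univ.erase i, P i k * x k := by
          rw [← Finset.add_sum_erase _ _ (Finset.mem_univ i)]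
        rw [hsplit]
        have habs : |∑ k ∈ Finset.univ.erase i, P i k * x k|
            ≤ ∑ k ∈ Finset.univ.erase i, P i k * |x k| := by
          refine (Finset.abs_sum_le_sum_abs _ _).trans ?_
          refine Finset.sum_le_sum fun k _ => ?_
          rw [abs_mul, abs_of_nonneg (hpos i k)]
        have h2 : |P i i * x i| ≤ |P i i * x i + ∑ k ∈ Finset.univ.erase i, P i k * x k|
            + |∑ k ∈ Finset.univ.erase i, P i k * x k| := by
          have := abs_sub (P i i * x i + ∑ k ∈ Finset.univ.erase i, P i k * x k)
            (∑ k ∈ Finset.univ.erase i, P i k * x k)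
          simpa using this
        rw [abs_mul, abs_of_nonneg (hpos i i)] at h2
        linarith
      have herase : ∑ k ∈ Finset.univ.erase i, P i k * |x k|
          = ∑ k, P i k * |x k| - P i i * |x i| :=
        Finset.sum_erase_eq_sub (Finset.mem_univ i)
      rw [herase] at h1
      linarith
    have hsum := Finset.sum_le_sum (s := Finset.univ) (fun i _ => key i)
    rw [Finset.sum_sub_distrib] at hsum
    have hswap : ∑ i, ∑ k, P i k * |x k| = ∑ k, |x k| := by
      rw [Finset.sum_comm]
      refine Finset.sum_congr rfl fun k _ => ?_
      rw [← Finset.sum_mul, hcol k, one_mul]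
    rw [hswap] at hsum
    have hlow : (1 - 2 * ρmax) * ∑ i, |x i| ≤ (∑ i, 2 * P i i * |x i|) - ∑ k, |x k| := by
      rw [Finset.mul_sum, ← Finset.sum_sub_distrib]
      refine Finset.sum_le_sum fun i _ => ?_
      have := hdiag i
      nlinarith [abs_nonneg (x i)]
    linarith
  -- combine
  have hx2 : ∑ i, x i ^ 2 ≤ (∑ i, |x i|) ^ 2 := by
    have := Finset.sum_sq_le_sq_sum_of_nonneg (s := Finset.univ)
      (f := fun i => |x i|) (fun i _ => abs_nonneg _)
    simpa [sq_abs] using this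
  have hy2 : (∑ i, |y i|) ^ 2 ≤ (c : ℝ) * ∑ i, y i ^ 2 := by
    have := sq_sum_le_card_mul_sum_sq (s := Finset.univ) (f := fun i => |y i|)
    simpa [sq_abs] using this
  have hxnn : 0 ≤ ∑ i, |x i| := Finset.sum_nonneg fun i _ => abs_nonneg _
  have hsq : ((1 - 2 * ρmax) * ∑ i, |x i|) ^ 2 ≤ (∑ i, |y i|) ^ 2 := by
    apply sq_le_sq' <;> nlinarith [Finset.sum_nonneg (s := Finset.univ)
      (f := fun i => |y i|) (fun i _ => abs_nonneg (y i))]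
  have h2ρsq : (0:ℝ) < (1 - 2 * ρmax) ^ 2 := by positivity
  rw [mul_pow] at hsq
  calc ∑ i, x i ^ 2 ≤ (∑ i, |x i|) ^ 2 := hx2
    _ ≤ (∑ i, |y i|) ^ 2 / (1 - 2 * ρmax) ^ 2 := by
        rw [le_div_iff₀ h2ρsq]; linarith
    _ ≤ ((c : ℝ) * ∑ i, y i ^ 2) / (1 - 2 * ρmax) ^ 2 :=
        (div_le_div_iff_of_pos_right h2ρsq).2 hy2
    _ = ((c : ℝ) / (1 - 2 * ρmax) ^ 2) * ∑ i, y i ^ 2 := by ring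
end

section
/- (Water-leveling optimality, binary case.) Let p₁, p₂ be probability densities on Γ ⊆ ℝⁿ, let t* > 0, and suppose the partition {D₁*, D₂*} of Γ with D₁* ⊇ {r : p₁(r) > t* p₂(r)}, D₂* ⊇ {r : p₁(r) < t* p₂(r)} satisfies μ₁ := ∫_{D₁*} p₁ = ∫_{D₂*} p₂ =: μ₂. Then for any other measurable partition {D₁, D₂} of Γ, min(∫_{D₁} p₁, ∫_{D₂} p₂) ≤ μ₁; equivalently, the partition {D₁*, D₂*} minimizes ρ_max = max(1 − ∫_{D₁} p₁, 1 − ∫_{D₂} p₂) over all measurable partitions. -/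
open MeasureTheory

theorem stmt15 (n : ℕ) (Γ : Set (Fin n → ℝ)) (hΓ : MeasurableSet Γ)
    (p₁ p₂ : (Fin n → ℝ) → ℝ)
    (hm₁ : Measurable p₁) (hm₂ : Measurable p₂)
    (h0₁ : ∀ r, 0 ≤ p₁ r) (h0₂ : ∀ r, 0 ≤ p₂ r)
    (hi₁ : IntegrableOn p₁ Γ) (hi₂ : IntegrableOn p₂ Γ)
    (h1₁ : ∫ r in Γ, p₁ r = 1) (h1₂ : ∫ r in Γ, p₂ r = 1)
    (t : ℝ) (ht : 0 < t)
    (D₁ D₂ : Set (Fin n → ℝ)) (hD₁ : MeasurableSet D₁) (hD₂ : MeasurableSet D₂)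
    (hsub₁ : {r ∈ Γ | t * p₂ r < p₁ r} ⊆ D₁)
    (hsub₂ : {r ∈ Γ | p₁ r < t * p₂ r} ⊆ D₂)
    (hdisj : Disjoint D₁ D₂) (hcover : D₁ ∪ D₂ = Γ)
    (heq : ∫ r in D₁, p₁ r = ∫ r in D₂, p₂ r) :
    ∀ E₁ E₂ : Set (Fin n → ℝ), MeasurableSet E₁ → MeasurableSet E₂ →
      Disjoint E₁ E₂ → E₁ ∪ E₂ = Γ →
        min (∫ r in E₁, p₁ r) (∫ r in E₂, p₂ r) ≤ ∫ r in D₁, p₁ r := by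
  intro E₁ E₂ hE₁ hE₂ hEdisj hEcover
  set f : (Fin n → ℝ) → ℝ := fun r => max (p₁ r) (t * p₂ r) with hf
  have hif : IntegrableOn f Γ := hi₁.sup (hi₂.const_mul t)
  have hmf : Measurable f := hm₁.max (hm₂.const_mul t)
  -- subsets of Γ
  have hD₁Γ : D₁ ⊆ Γ := hcover ▸ Set.subset_union_left
  have hD₂Γ : D₂ ⊆ Γ := hcover ▸ Set.subset_union_right
  have hE₁Γ : E₁ ⊆ Γ := hEcover ▸ Set.subset_union_left
  have hE₂Γ : E₂ ⊆ Γ := hEcover ▸ Set.subset_union_right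
  have hifD₁ : IntegrableOn f D₁ := hif.mono_set hD₁Γ
  have hifD₂ : IntegrableOn f D₂ := hif.mono_set hD₂Γ
  have hifE₁ : IntegrableOn f E₁ := hif.mono_set hE₁Γ
  have hifE₂ : IntegrableOn f E₂ := hif.mono_set hE₂Γ
  -- on D₁, f = p₁
  have hfD₁ : ∀ r ∈ D₁, f r = p₁ r := by
    intro r hr
    have hle : t * p₂ r ≤ p₁ r := by
      by_contra hlt
      push_neg at hlt
      have : r ∈ D₂ := hsub₂ ⟨hD₁Γ hr, hlt⟩
      exact hdisj.le_bot ⟨hr, this⟩ |>.elim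
    simpa [hf] using max_eq_left hle
  have hfD₂ : ∀ r ∈ D₂, f r = t * p₂ r := by
    intro r hr
    have hle : p₁ r ≤ t * p₂ r := by
      by_contra hlt
      push_neg at hlt
      have : r ∈ D₁ := hsub₁ ⟨hD₂Γ hr, hlt⟩
      exact hdisj.le_bot ⟨this, hr⟩ |>.elim
    simpa [hf] using max_eq_right hle
  have hintD₁ : ∫ r in D₁, f r = ∫ r in D₁, p₁ r :=
    setIntegral_congr_fun hD₁ hfD₁
  have hintD₂ : ∫ r in D₂, f r = t * ∫ r in D₂, p₂ r := by
    rw [setIntegral_congr_fun hD₂ hfD₂, integral_const_mul]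
  have hΓsplitD : ∫ r in Γ, f r = (∫ r in D₁, f r) + ∫ r in D₂, f r := by
    rw [← hcover]; exact setIntegral_union hdisj hD₂ hifD₁ hifD₂
  have hΓsplitE : ∫ r in Γ, f r = (∫ r in E₁, f r) + ∫ r in E₂, f r := by
    rw [← hEcover]; exact setIntegral_union hEdisj hE₂ hifE₁ hifE₂
  have hle₁ : ∫ r in E₁, p₁ r ≤ ∫ r in E₁, f r :=
    setIntegral_mono_on (hi₁.mono_set hE₁Γ) hifE₁ hE₁ (fun r _ => le_max_left _ _)
  have hle₂ : t * ∫ r in E₂, p₂ r ≤ ∫ r in E₂, f r := by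
    rw [← integral_const_mul]
    exact setIntegral_mono_on ((hi₂.mono_set hE₂Γ).const_mul t) hifE₂ hE₂
      (fun r _ => le_max_right _ _)
  set μ := ∫ r in D₁, p₁ r with hμ
  have key : (∫ r in E₁, p₁ r) + t * ∫ r in E₂, p₂ r ≤ (1 + t) * μ := by
    have hsum : (∫ r in E₁, f r) + ∫ r in E₂, f r = μ + t * μ := by
      have h : (∫ r in D₁, f r) + ∫ r in D₂, f r = μ + t * μ := by
        rw [hintD₁, hintD₂, ← heq]
      linarith [hΓsplitD, hΓsplitE]
    nlinarith [hle₁, hle₂]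
  rcases le_total (∫ r in E₁, p₁ r) (∫ r in E₂, p₂ r) with h | h
  · rw [min_eq_left h]
    nlinarith [mul_le_mul_of_nonneg_left h ht.le]
  · rw [min_eq_right h]
    nlinarith [mul_le_mul_of_nonneg_left h ht.le]
end

section
/- (Key exchange inequality for water-leveling.) Let p₁, p₂ be probability densities on Γ, t* > 0, D₁* = {r : p₁(r) > t* p₂(r)}, D₂* = {r : p₁(r) < t* p₂(r)}. Let δ₁ ⊆ D₁* have positive measure under p₁ and δ₂ ⊆ D₂* be measurable, and set D̄₁ = (D₁* \ δ₁) ∪ δ₂, D̄₂ = (D₂* \ δ₂) ∪ δ₁ with measures μ̄₁ = ∫_{D̄₁} p₁ and μ̄₂ = ∫_{D̄₂} p₂. Then μ̄₁ − ∫_{D₁*} p₁ < −t* (μ̄₂ − ∫_{D₂*} p₂). -/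
open MeasureTheory

theorem stmt16 (n : ℕ) (Γ : Set (Fin n → ℝ)) (hΓ : MeasurableSet Γ)
    (p₁ p₂ : (Fin n → ℝ) → ℝ)
    (hm₁ : Measurable p₁) (hm₂ : Measurable p₂)
    (h0₁ : ∀ r, 0 ≤ p₁ r) (h0₂ : ∀ r, 0 ≤ p₂ r)
    (hi₁ : IntegrableOn p₁ Γ) (hi₂ : IntegrableOn p₂ Γ)
    (h1₁ : ∫ r in Γ, p₁ r = 1) (h1₂ : ∫ r in Γ, p₂ r = 1)
    (t : ℝ) (ht : 0 < t)
    (δ₁ δ₂ : Set (Fin n → ℝ)) (hδ₁m : MeasurableSet δ₁) (hδ₂m : MeasurableSet δ₂)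
    (hδ₁ : δ₁ ⊆ {r ∈ Γ | t * p₂ r < p₁ r})
    (hδ₂ : δ₂ ⊆ {r ∈ Γ | p₁ r < t * p₂ r})
    (hδ₁pos : 0 < ∫ r in δ₁, p₁ r) :
    (∫ r in ({r ∈ Γ | t * p₂ r < p₁ r} \ δ₁) ∪ δ₂, p₁ r)
        - (∫ r in {r ∈ Γ | t * p₂ r < p₁ r}, p₁ r)
      < -t * ((∫ r in ({r ∈ Γ | p₁ r < t * p₂ r} \ δ₂) ∪ δ₁, p₂ r)
        - (∫ r in {r ∈ Γ | p₁ r < t * p₂ r}, p₂ r)) := by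
  set D₁ : Set (Fin n → ℝ) := {r ∈ Γ | t * p₂ r < p₁ r} with hD₁
  set D₂ : Set (Fin n → ℝ) := {r ∈ Γ | p₁ r < t * p₂ r} with hD₂
  have hD₁m : MeasurableSet D₁ := hΓ.inter (measurableSet_lt (hm₂.const_mul t) hm₁)
  have hD₂m : MeasurableSet D₂ := hΓ.inter (measurableSet_lt hm₁ (hm₂.const_mul t))
  have hD₁Γ : D₁ ⊆ Γ := fun r hr => hr.1
  have hD₂Γ : D₂ ⊆ Γ := fun r hr => hr.1
  -- integrability facts
  have hi₁D₁ : IntegrableOn p₁ D₁ := hi₁.mono_set hD₁Γ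
  have hi₁δ₁ : IntegrableOn p₁ δ₁ := hi₁.mono_set (hδ₁.trans hD₁Γ)
  have hi₁δ₂ : IntegrableOn p₁ δ₂ := hi₁.mono_set (hδ₂.trans hD₂Γ)
  have hi₂D₂ : IntegrableOn p₂ D₂ := hi₂.mono_set hD₂Γ
  have hi₂δ₁ : IntegrableOn p₂ δ₁ := hi₂.mono_set (hδ₁.trans hD₁Γ)
  have hi₂δ₂ : IntegrableOn p₂ δ₂ := hi₂.mono_set (hδ₂.trans hD₂Γ)
  -- disjointness
  have hdisj : Disjoint D₁ D₂ := by
    rw [Set.disjoint_left]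
    rintro r ⟨_, h1⟩ ⟨_, h2⟩
    exact absurd (h1.trans h2) (lt_irrefl _)
  have hd₁ : Disjoint (D₁ \ δ₁) δ₂ :=
    (hdisj.mono Set.diff_subset hδ₂)
  have hd₂ : Disjoint (D₂ \ δ₂) δ₁ :=
    (hdisj.symm.mono Set.diff_subset hδ₁)
  -- split unions
  have e1 : (∫ r in (D₁ \ δ₁) ∪ δ₂, p₁ r) = (∫ r in D₁ \ δ₁, p₁ r) + ∫ r in δ₂, p₁ r :=
    setIntegral_union hd₁ hδ₂m (hi₁D₁.mono_set Set.diff_subset) hi₁δ₂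
  have e2 : (∫ r in D₂ \ δ₂, p₂ r) + ∫ r in δ₁, p₂ r = ∫ r in (D₂ \ δ₂) ∪ δ₁, p₂ r :=
    (setIntegral_union hd₂ hδ₁m (hi₂D₂.mono_set Set.diff_subset) hi₂δ₁).symm
  have e3 : (∫ r in D₁ \ δ₁, p₁ r) + ∫ r in δ₁, p₁ r = ∫ r in D₁, p₁ r := by
    rw [← setIntegral_union Set.disjoint_sdiff_left hδ₁m
        (hi₁D₁.mono_set Set.diff_subset) hi₁δ₁, Set.diff_union_of_subset hδ₁]
  have e4 : (∫ r in D₂ \ δ₂, p₂ r) + ∫ r in δ₂, p₂ r = ∫ r in D₂, p₂ r := by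
    rw [← setIntegral_union Set.disjoint_sdiff_left hδ₂m
        (hi₂D₂.mono_set Set.diff_subset) hi₂δ₂, Set.diff_union_of_subset hδ₂]
  -- key strict inequality on δ₁
  have hμδ₁ : volume δ₁ ≠ 0 := by
    intro h
    rw [Measure.restrict_eq_zero.mpr h] at hδ₁pos
    simp at hδ₁pos
  have key₁ : 0 < (∫ r in δ₁, p₁ r) - t * ∫ r in δ₁, p₂ r := by
    have : 0 < ∫ r in δ₁, (p₁ r - t * p₂ r) := by
      have hint : IntegrableOn (fun r => p₁ r - t * p₂ r) δ₁ :=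
        hi₁δ₁.sub (hi₂δ₁.const_mul t)
      have hnn : 0 ≤ᵐ[volume.restrict δ₁] fun r => p₁ r - t * p₂ r := by
        filter_upwards [ae_restrict_mem hδ₁m] with r hr
        have := (hδ₁ hr).2
        simp only [Pi.zero_apply]
        linarith
      by_contra hle
      push_neg at hle
      have hz : ∫ r in δ₁, (p₁ r - t * p₂ r) = 0 :=
        le_antisymm hle (integral_nonneg_of_ae hnn)
      have := (integral_eq_zero_iff_of_nonneg_ae hnn hint).mp hz
      rw [Filter.EventuallyEq, ae_restrict_iff' hδ₁m] at this
      have hμ : volume {r | ¬ (r ∈ δ₁ → (fun r => p₁ r - t * p₂ r) r = (0 : (Fin n → ℝ) → ℝ) r)} = 0 := this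
      have hsub : δ₁ ⊆ {r | ¬ (r ∈ δ₁ → (fun r => p₁ r - t * p₂ r) r = (0 : (Fin n → ℝ) → ℝ) r)} := by
        intro r hr
        simp only [Set.mem_setOf_eq, Classical.not_imp]
        refine ⟨hr, ?_⟩
        have := (hδ₁ hr).2
        simp only [Pi.zero_apply]
        intro h; linarith
      exact hμδ₁ (measure_mono_null hsub hμ)
    rwa [integral_sub hi₁δ₁ (hi₂δ₁.const_mul t), integral_const_mul] at this
  have key₂ : (∫ r in δ₂, p₁ r) - t * (∫ r in δ₂, p₂ r) ≤ 0 := by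
    have : (∫ r in δ₂, (p₁ r - t * p₂ r)) ≤ 0 := by
      apply integral_nonpos_of_ae
      filter_upwards [ae_restrict_mem hδ₂m] with r hr
      have := (hδ₂ hr).2
      simp only [Pi.zero_apply]
      linarith
    rwa [integral_sub hi₁δ₂ (hi₂δ₂.const_mul t), integral_const_mul] at this
  rw [e1, ← e2]
  nlinarith [key₁, key₂, e3, e4]
end

section
/- (Optimality of equal-diagonal confusion matrix under optimal classification domains.) Let p₁,…,p_c be probability densities on Γ, let q = (q₁,…,q_c) be a probability vector, and suppose the sets D_k*(q) = {r : q_k p_k(r) > q_j p_j(r) for all j ≠ k} partition Γ up to sets of measure zero in every p_k. Let P* be the induced confusion matrix, P*_{j,k} = ∫_{D_j*} p_k, and assume all diagonal entries P*_{k,k} are equal. Then for every other measurable partition U' = {D_k'} of Γ with induced confusion matrix P', one has ρ_max(U') ≥ ρ_max(U*) = 1 − P*_{1,1}, where ρ_max(U) = max_k (1 − P_{k,k}(U)). -/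
open MeasureTheory Finset

theorem stmt17 (n c : ℕ) (hc : 0 < c) (Γ : Set (Fin n → ℝ)) (hΓ : MeasurableSet Γ)
    (p : Fin c → (Fin n → ℝ) → ℝ)
    (hmeas : ∀ k, Measurable (p k)) (hpos : ∀ k r, 0 ≤ p k r)
    (hint : ∀ k, IntegrableOn (p k) Γ) (hone : ∀ k, ∫ r in Γ, p k r = 1)
    (q : Fin c → ℝ) (hq0 : ∀ k, 0 ≤ q k) (hq1 : ∑ k, q k = 1)
    (Dstar : Fin c → Set (Fin n → ℝ))
    (hDdef : ∀ k, Dstar k = {r ∈ Γ | ∀ j, j ≠ k → q j * p j r < q k * p k r})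
    (hnull : ∀ k, ∫ r in Γ \ ⋃ j, Dstar j, p k r = 0)
    (hdiag : ∀ j k, ∫ r in Dstar j, p j r = ∫ r in Dstar k, p k r)
    (D' : Fin c → Set (Fin n → ℝ)) (hD'm : ∀ k, MeasurableSet (D' k))
    (hD'disj : Pairwise (Function.onFun Disjoint D')) (hD'cover : (⋃ k, D' k) = Γ) :
    ∃ k, 1 - (∫ r in Dstar ⟨0, hc⟩, p ⟨0, hc⟩ r) ≤ 1 - ∫ r in D' k, p k r := by
  classical
  set k0 : Fin c := ⟨0, hc⟩ with hk0
  set α : ℝ := ∫ r in Dstar k0, p k0 r with hα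
  -- basic facts about Dstar
  have hDsub : ∀ k, Dstar k ⊆ Γ := by
    intro k; rw [hDdef]; exact fun r hr => hr.1
  have hDm : ∀ k, MeasurableSet (Dstar k) := by
    intro k
    rw [hDdef]
    have heq : {r ∈ Γ | ∀ j, j ≠ k → q j * p j r < q k * p k r}
        = Γ ∩ ⋂ j, {r | j ≠ k → q j * p j r < q k * p k r} := by
      ext r; simp [Set.mem_iInter]
    rw [heq]
    refine hΓ.inter (MeasurableSet.iInter fun j => ?_)
    by_cases h : j = k
    · simp [h]
    · have : {r | j ≠ k → q j * p j r < q k * p k r}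
          = {r | q j * p j r < q k * p k r} := by ext r; simp [h]
      rw [this]
      exact measurableSet_lt ((hmeas j).const_mul _) ((hmeas k).const_mul _)
  have hDdisj : Pairwise (Function.onFun Disjoint Dstar) := by
    intro j k hjk
    rw [Function.onFun, Set.disjoint_left]
    intro r hrj hrk
    rw [hDdef] at hrj hrk
    exact lt_asymm (hrj.2 k hjk.symm) (hrk.2 j hjk)
  have hD'sub : ∀ k, D' k ⊆ Γ := by
    intro k; rw [← hD'cover]; exact Set.subset_iUnion D' k
  have hintS : ∀ (k : Fin c) (S : Set (Fin n → ℝ)), S ⊆ Γ → IntegrableOn (p k) S := by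
    intro k S hS; exact (hint k).mono_set hS
  -- finite sum over disjoint unions
  have hsum : ∀ (f : (Fin n → ℝ) → ℝ) (s : Fin c → Set (Fin n → ℝ)),
      (∀ i, MeasurableSet (s i)) → Pairwise (Function.onFun Disjoint s) →
      IntegrableOn f (⋃ i, s i) →
      ∫ r in ⋃ i, s i, f r = ∑ i, ∫ r in s i, f r := by
    intro f s hm hd hi
    rw [MeasureTheory.integral_iUnion hm hd hi, tsum_fintype]
  -- key inequality on each piece
  have hkey : ∀ (j k : Fin c),
      q k * ∫ r in D' k ∩ Dstar j, p k r ≤ q j * ∫ r in D' k ∩ Dstar j, p j r := by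
    intro j k
    have hSΓ : D' k ∩ Dstar j ⊆ Γ := fun r hr => hDsub j hr.2
    have hSm : MeasurableSet (D' k ∩ Dstar j) := (hD'm k).inter (hDm j)
    rw [← integral_const_mul, ← integral_const_mul]
    refine setIntegral_mono_on (((hintS k _ hSΓ)).const_mul _)
      (((hintS j _ hSΓ)).const_mul _) hSm ?_
    intro r hr
    by_cases hkj : k = j
    · subst hkj; exact le_rfl
    · have hrD : r ∈ Dstar j := hr.2
      rw [hDdef] at hrD
      exact (hrD.2 k hkj).le
  -- diagonal sums
  have hDcup : ∀ j, Dstar j = ⋃ k, D' k ∩ Dstar j := by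
    intro j
    ext r
    constructor
    · intro hr
      have : r ∈ ⋃ k, D' k := by rw [hD'cover]; exact hDsub j hr
      obtain ⟨k, hk⟩ := Set.mem_iUnion.mp this
      exact Set.mem_iUnion.mpr ⟨k, hk, hr⟩
    · intro hr
      obtain ⟨k, hk⟩ := Set.mem_iUnion.mp hr
      exact hk.2
  have hDstar_sum : ∀ j, ∫ r in Dstar j, p j r = ∑ k, ∫ r in D' k ∩ Dstar j, p j r := by
    intro j
    conv_lhs => rw [hDcup j]
    refine hsum _ _ (fun i => (hD'm i).inter (hDm j))
      (fun a b hab => Set.disjoint_left.mpr fun r hra hrb =>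
        Set.disjoint_left.mp (hD'disj hab) hra.1 hrb.1) ?_
    rw [← hDcup j]
    exact hintS j _ (hDsub j)
  -- upper bound for each D' k integral
  have hupper : ∀ k, ∫ r in D' k, p k r ≤ ∑ j, ∫ r in D' k ∩ Dstar j, p k r := by
    intro k
    set A : Set (Fin n → ℝ) := ⋃ j, D' k ∩ Dstar j with hA
    set B : Set (Fin n → ℝ) := D' k ∩ (Γ \ ⋃ j, Dstar j) with hB
    have hAm : MeasurableSet A := MeasurableSet.iUnion fun j => (hD'm k).inter (hDm j)
    have hBm : MeasurableSet B := (hD'm k).inter (hΓ.diff (MeasurableSet.iUnion hDm))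
    have hAB : D' k = A ∪ B := by
      ext r
      constructor
      · intro hr
        by_cases h : r ∈ ⋃ j, Dstar j
        · obtain ⟨j, hj⟩ := Set.mem_iUnion.mp h
          exact Or.inl (Set.mem_iUnion.mpr ⟨j, hr, hj⟩)
        · exact Or.inr ⟨hr, hD'sub k hr, h⟩
      · rintro (hr | hr)
        · obtain ⟨j, hj⟩ := Set.mem_iUnion.mp hr
          exact hj.1
        · exact hr.1
    have hdisjAB : Disjoint A B := by
      rw [Set.disjoint_left]
      rintro r hrA hrB
      obtain ⟨j, hj⟩ := Set.mem_iUnion.mp hrA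
      exact hrB.2.2 (Set.mem_iUnion.mpr ⟨j, hj.2⟩)
    have hAΓ : A ⊆ Γ := Set.iUnion_subset fun j r hr => hDsub j hr.2
    have hBΓ : B ⊆ Γ := fun r hr => hr.2.1
    have hBle : ∫ r in B, p k r ≤ 0 := by
      have h1 : ∫ r in B, p k r ≤ ∫ r in Γ \ ⋃ j, Dstar j, p k r := by
        refine setIntegral_mono_set (hintS k _ (Set.diff_subset)) ?_ ?_
        · exact Filter.Eventually.of_forall fun r => hpos k r
        · exact HasSubset.Subset.eventuallyLE fun r hr => hr.2
      rw [hnull k] at h1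
      exact h1
    calc ∫ r in D' k, p k r = (∫ r in A, p k r) + ∫ r in B, p k r := by
          rw [hAB]
          exact setIntegral_union hdisjAB hBm (hintS k _ hAΓ) (hintS k _ hBΓ)
      _ ≤ ∫ r in A, p k r := by linarith
      _ = ∑ j, ∫ r in D' k ∩ Dstar j, p k r := by
          refine hsum _ _ (fun j => (hD'm k).inter (hDm j))
            (fun a b hab => Set.disjoint_left.mpr fun r hra hrb =>
              Set.disjoint_left.mp (hDdisj hab) hra.2 hrb.2) (hintS k _ hAΓ)
  -- now the contradiction argument
  by_contra hcon
  push_neg at hcon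
  have hlt : ∀ k, α < ∫ r in D' k, p k r := by
    intro k
    have := hcon k
    linarith
  obtain ⟨k1, hk1⟩ : ∃ k, 0 < q k := by
    by_contra h
    push_neg at h
    have : ∀ k, q k = 0 := fun k => le_antisymm (h k) (hq0 k)
    simp [this] at hq1
  have hlow : α < ∑ k, q k * ∫ r in D' k, p k r := by
    have h1 : α = ∑ k, q k * α := by
      rw [← Finset.sum_mul, hq1, one_mul]
    rw [h1]
    refine Finset.sum_lt_sum (fun i _ => mul_le_mul_of_nonneg_left (hlt i).le (hq0 i))
      ⟨k1, Finset.mem_univ k1, (mul_lt_mul_iff_right₀ hk1).mpr (hlt k1)⟩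
  have hhigh : ∑ k, q k * ∫ r in D' k, p k r ≤ α := by
    calc ∑ k, q k * ∫ r in D' k, p k r
        ≤ ∑ k, ∑ j, q j * ∫ r in D' k ∩ Dstar j, p j r := by
          refine Finset.sum_le_sum fun k _ => ?_
          calc q k * ∫ r in D' k, p k r
              ≤ q k * ∑ j, ∫ r in D' k ∩ Dstar j, p k r :=
                mul_le_mul_of_nonneg_left (hupper k) (hq0 k)
            _ = ∑ j, q k * ∫ r in D' k ∩ Dstar j, p k r := Finset.mul_sum _ _ _
            _ ≤ ∑ j, q j * ∫ r in D' k ∩ Dstar j, p j r :=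
                Finset.sum_le_sum fun j _ => hkey j k
      _ = ∑ j, q j * ∑ k, ∫ r in D' k ∩ Dstar j, p j r := by
          rw [Finset.sum_comm]
          exact Finset.sum_congr rfl fun j _ => (Finset.mul_sum _ _ _).symm
      _ = ∑ j, q j * α := by
          refine Finset.sum_congr rfl fun j _ => ?_
          rw [← hDstar_sum j, hdiag j k0]
      _ = α := by rw [← Finset.sum_mul, hq1, one_mul]
  linarith
end
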